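/- arXiv:2001.10326 — 7 statements merged into one kernel-verified Lean document; each statement's English description precedes it below -/
import Mathlib

section
/- Let α, ρ, u, a, u_s, b be real numbers with α ≠ 0 and ρ > 0, and let C be the 5×5 real matrix with rows (u_s, 0, 0, 0, 0), (ρ(u−u_s)/α, u, ρ, 0, 0), (0, a²/ρ, u, b/ρ, 0), (0, 0, 0, u, 0), (0, 0, 0, 0, 0). Then for every λ ∈ ℝ, det(C − λ·I₅) = −λ·(u_s − λ)·(u − λ)·((u − λ)² − a²). In particular the eigenvalues of C are exactly u_s, u − a, u, u + a and 0, and they do not depend on the volume fraction α. -/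
/-! Expanding along the rows of `α`, `s` and `u_s`, which have a single nonzero entry,
reduces `det (C - λ I)` to the acoustic block `[[u - λ, ρ], [a² / ρ, u - λ]]`, whose
determinant is `(u - λ)² - a²` once `ρ` cancels. The only entry involving `α` lies in
the column of the `α`-row's single nonzero entry, so it drops out of the expansion. -/

theorem Matrix.det_fin_five_of_acoustic_pattern {R : Type*} [CommRing R]
    (p x q₁ r s q₂ t q₃ z : R) :
    !![p, 0, 0, 0, 0;
       x, q₁, r, 0, 0;
       0, s, q₂, t, 0;
       0, 0, 0, q₃, 0;
       0, 0, 0, 0, z].det = p * (q₁ * q₂ - r * s) * q₃ * z := by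
  simp [Matrix.det_succ_row_zero, Fin.sum_univ_succ, Fin.succAbove]
  ring

theorem neg_mul_sub_mul_sub_mul_sq_sub_sq_eq_zero_iff {R : Type*} [CommRing R] [IsDomain R]
    (l p q a : R) :
    -l * (p - l) * (q - l) * ((q - l) ^ 2 - a ^ 2) = 0 ↔
      l = p ∨ l = q - a ∨ l = q ∨ l = q + a ∨ l = 0 := by
  have hsq : (q - l) ^ 2 - a ^ 2 = (q - a - l) * (q + a - l) := by ring
  simp only [hsq, mul_eq_zero, neg_eq_zero, sub_eq_zero]
  tauto

theorem reducedBN_charpoly_general (α ρ u a u_s b : ℝ) (hρ : 0 < ρ) :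
    let C : Matrix (Fin 5) (Fin 5) ℝ :=
      !![u_s, 0, 0, 0, 0;
         ρ * (u - u_s) / α, u, ρ, 0, 0;
         0, a ^ 2 / ρ, u, b / ρ, 0;
         0, 0, 0, u, 0;
         0, 0, 0, 0, 0]
    ∀ lam : ℝ,
      (C - lam • (1 : Matrix (Fin 5) (Fin 5) ℝ)).det
        = -lam * (u_s - lam) * (u - lam) * ((u - lam) ^ 2 - a ^ 2) ∧
      ((C - lam • (1 : Matrix (Fin 5) (Fin 5) ℝ)).det = 0 ↔
        lam = u_s ∨ lam = u - a ∨ lam = u ∨ lam = u + a ∨ lam = 0) := by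
  intro C lam
  have hC : C - lam • (1 : Matrix (Fin 5) (Fin 5) ℝ) =
      !![u_s - lam, 0, 0, 0, 0;
         ρ * (u - u_s) / α, u - lam, ρ, 0, 0;
         0, a ^ 2 / ρ, u - lam, b / ρ, 0;
         0, 0, 0, u - lam, 0;
         0, 0, 0, 0, -lam] := by
    ext i j
    fin_cases i <;> fin_cases j <;> simp [C]
  have hdet : (C - lam • (1 : Matrix (Fin 5) (Fin 5) ℝ)).det
      = -lam * (u_s - lam) * (u - lam) * ((u - lam) ^ 2 - a ^ 2) := by
    rw [hC, Matrix.det_fin_five_of_acoustic_pattern, mul_div_cancel₀ _ hρ.ne']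
    ring
  exact ⟨hdet, hdet ▸ neg_mul_sub_mul_sub_mul_sq_sub_sq_eq_zero_iff lam u_s u a⟩

/-- The quasilinear system matrix `C` of the reduced Baer–Nunziato model in
primitive variables `V = (α, ρ, u, s, u_s)` has characteristic polynomial
`det (C - λ I) = -λ (u_s - λ) (u - λ) ((u - λ)² - a²)`; in particular its
eigenvalues are exactly `u_s, u - a, u, u + a, 0`, independent of `α`. -/
theorem reducedBN_charpoly (α ρ u a u_s b : ℝ) (hα : α ≠ 0) (hρ : 0 < ρ) :
    let C : Matrix (Fin 5) (Fin 5) ℝ :=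
      !![u_s, 0, 0, 0, 0;
         ρ * (u - u_s) / α, u, ρ, 0, 0;
         0, a ^ 2 / ρ, u, b / ρ, 0;
         0, 0, 0, u, 0;
         0, 0, 0, 0, 0]
    ∀ lam : ℝ,
      (C - lam • (1 : Matrix (Fin 5) (Fin 5) ℝ)).det
        = -lam * (u_s - lam) * (u - lam) * ((u - lam) ^ 2 - a ^ 2) ∧
      ((C - lam • (1 : Matrix (Fin 5) (Fin 5) ℝ)).det = 0 ↔
        lam = u_s ∨ lam = u - a ∨ lam = u ∨ lam = u + a ∨ lam = 0) :=
  reducedBN_charpoly_general α ρ u a u_s b hρ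
end

section
/- Let α, ρ, u, a, u_s, b be real numbers with α ≠ 0, ρ > 0 and (u − u_s)² ≠ a², and let C be the 5×5 real matrix with rows (u_s, 0, 0, 0, 0), (ρ(u−u_s)/α, u, ρ, 0, 0), (0, a²/ρ, u, b/ρ, 0), (0, 0, 0, u, 0), (0, 0, 0, 0, 0). Then the vector R₀ = (1, −ρ(u−u_s)²/(α((u−u_s)² − a²)), (u−u_s)a²/(α((u−u_s)² − a²)), 0, 0) satisfies C·R₀ = u_s·R₀, i.e. R₀ is an eigenvector of C for the eigenvalue u_s. -/
/-!
With `d = u - u_s`, only the mass and momentum rows of `C R₀ = u_s R₀` are not immediate. The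
momentum row is `(a² / ρ) R₀₁ + d R₀₂ = 0`, where the factors `ρ` cancel; in the mass row
`ρ d / α + d R₀₁ + ρ R₀₂ = 0` the last two terms sum to `-(ρ d / α) (d² - a²) / (d² - a²)`.
-/

theorem momentum_row_eq_zero {ρ : ℝ} (hρ : ρ ≠ 0) (α a d : ℝ) :
    a ^ 2 / ρ * (-(ρ * d ^ 2) / (α * (d ^ 2 - a ^ 2))) +
      d * (d * a ^ 2 / (α * (d ^ 2 - a ^ 2))) = 0 := by
  field_simp
  ring

theorem mass_row_eq_zero (α ρ a : ℝ) {d : ℝ} (hd : d ^ 2 - a ^ 2 ≠ 0) :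
    ρ * d / α + d * (-(ρ * d ^ 2) / (α * (d ^ 2 - a ^ 2))) +
      ρ * (d * a ^ 2 / (α * (d ^ 2 - a ^ 2))) = 0 := by
  generalize hD : d ^ 2 - a ^ 2 = D at hd ⊢
  have key : d * (-(ρ * d ^ 2) / (α * D)) + ρ * (d * a ^ 2 / (α * D)) =
      -(ρ * d / α) * ((d ^ 2 - a ^ 2) / D) := by
    ring
  rw [add_assoc, key, hD, div_self hd]
  ring

theorem reducedBN_eigenvector_R0_general (α ρ u a u_s b : ℝ) (hρ : 0 < ρ)
    (hres : (u - u_s) ^ 2 ≠ a ^ 2) :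
    let C : Matrix (Fin 5) (Fin 5) ℝ :=
      !![u_s, 0, 0, 0, 0;
         ρ * (u - u_s) / α, u, ρ, 0, 0;
         0, a ^ 2 / ρ, u, b / ρ, 0;
         0, 0, 0, u, 0;
         0, 0, 0, 0, 0]
    let R0 : Fin 5 → ℝ :=
      ![1, -(ρ * (u - u_s) ^ 2) / (α * ((u - u_s) ^ 2 - a ^ 2)),
        (u - u_s) * a ^ 2 / (α * ((u - u_s) ^ 2 - a ^ 2)), 0, 0]
    C.mulVec R0 = u_s • R0 := by
  intro C R0
  have hmass := mass_row_eq_zero α ρ a (sub_ne_zero.mpr hres)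
  have hmomentum := momentum_row_eq_zero hρ.ne' α a (u - u_s)
  funext i
  fin_cases i <;>
    simp only [C, R0, Matrix.mulVec, dotProduct, Fin.sum_univ_five, Fin.isValue, Fin.zero_eta,
      Fin.mk_one, Fin.reduceFinMk, Matrix.of_apply, Matrix.cons_val', Matrix.cons_val_fin_one,
      Matrix.cons_val, Matrix.cons_val_zero, Matrix.cons_val_one, mul_one, mul_zero, zero_mul,
      zero_add, add_zero, Pi.smul_apply, smul_eq_mul]
  · linear_combination hmass
  · linear_combination hmomentum

/-- `R₀` is an eigenvector of the primitive-variable system matrix `C` of the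
reduced Baer–Nunziato model for the eigenvalue `u_s` (the material interface). -/
theorem reducedBN_eigenvector_R0 (α ρ u a u_s b : ℝ) (hα : α ≠ 0) (hρ : 0 < ρ)
    (hres : (u - u_s) ^ 2 ≠ a ^ 2) :
    let C : Matrix (Fin 5) (Fin 5) ℝ :=
      !![u_s, 0, 0, 0, 0;
         ρ * (u - u_s) / α, u, ρ, 0, 0;
         0, a ^ 2 / ρ, u, b / ρ, 0;
         0, 0, 0, u, 0;
         0, 0, 0, 0, 0]
    let R0 : Fin 5 → ℝ :=
      ![1, -(ρ * (u - u_s) ^ 2) / (α * ((u - u_s) ^ 2 - a ^ 2)),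
        (u - u_s) * a ^ 2 / (α * ((u - u_s) ^ 2 - a ^ 2)), 0, 0]
    C.mulVec R0 = u_s • R0 :=
  reducedBN_eigenvector_R0_general α ρ u a u_s b hρ hres
end

section
/- Let α, ρ, u, a, u_s, b be real numbers with α ≠ 0, ρ > 0, a ≠ 0, b ≠ 0 and (u − u_s)² ≠ a², and let C be the 5×5 real matrix with rows (u_s, 0, 0, 0, 0), (ρ(u−u_s)/α, u, ρ, 0, 0), (0, a²/ρ, u, b/ρ, 0), (0, 0, 0, u, 0), (0, 0, 0, 0, 0). Let P be the 5×5 matrix whose columns are R₀ = (1, −ρ(u−u_s)²/(α((u−u_s)²−a²)), (u−u_s)a²/(α((u−u_s)²−a²)), 0, 0), R₁,₁ = (0, 1, −a/ρ, 0, 0), R₁,₂ = (0, 1, 0, −a²/b, 0), R₁,₃ = (0, 1, a/ρ, 0, 0) and R₂ = (0, 0, 0, 0, 1). Then P is invertible and P⁻¹·C·P = diag(u_s, u − a, u, u + a, 0); in particular C has a full set of 5 linearly independent real eigenvectors, so the reduced Baer–Nunziato system is hyperbolic at such states. -/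
/-!
Each column of `P` is an eigenvector of `C` for the corresponding diagonal entry; for `R₀` this
rests on `(u - u_s)² ≠ a²`, which keeps its denominator nonzero. Expanding along the first row,
`det P = 2 a³ / (b ρ) ≠ 0`, and an invertible matrix of eigenvectors conjugates `C` to the
diagonal matrix of their eigenvalues.
-/

namespace Matrix

variable {n R : Type*} [Fintype n] [DecidableEq n]

theorem mul_eq_mul_diagonal_iff [CommSemiring R] (A P : Matrix n n R) (d : n → R) :
    A * P = P * diagonal d ↔ ∀ j, A *ᵥ Pᵀ j = d j • Pᵀ j := by
  simp only [← Matrix.ext_iff, mul_diagonal, funext_iff, Pi.smul_apply, smul_eq_mul,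
    mul_comm (d _)]
  simp only [mul_apply, mulVec, dotProduct, transpose_apply]
  exact forall_comm

theorem inv_mul_mul_eq_diagonal [CommRing R] {A P : Matrix n n R} {d : n → R} (hP : IsUnit P)
    (h : ∀ j, A *ᵥ Pᵀ j = d j • Pᵀ j) : P⁻¹ * A * P = diagonal d := by
  rw [Matrix.mul_assoc, (mul_eq_mul_diagonal_iff A P d).mpr h,
    nonsing_inv_mul_cancel_left P _ ((isUnit_iff_isUnit_det P).mp hP)]

end Matrix

open Matrix

namespace ReducedBN

variable (α ρ u a u_s b : ℝ)

noncomputable def systemMatrix : Matrix (Fin 5) (Fin 5) ℝ :=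
  !![u_s, 0, 0, 0, 0;
     ρ * (u - u_s) / α, u, ρ, 0, 0;
     0, a ^ 2 / ρ, u, b / ρ, 0;
     0, 0, 0, u, 0;
     0, 0, 0, 0, 0]

noncomputable def eigenvectorMatrix : Matrix (Fin 5) (Fin 5) ℝ :=
  !![1, 0, 0, 0, 0;
     -(ρ * (u - u_s) ^ 2) / (α * ((u - u_s) ^ 2 - a ^ 2)), 1, 1, 1, 0;
     (u - u_s) * a ^ 2 / (α * ((u - u_s) ^ 2 - a ^ 2)), -(a / ρ), 0, a / ρ, 0;
     0, 0, -(a ^ 2 / b), 0, 0;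
     0, 0, 0, 0, 1]

def eigenvalues : Fin 5 → ℝ := ![u_s, u - a, u, u + a, 0]

theorem det_eigenvectorMatrix : (eigenvectorMatrix α ρ u a u_s b).det = 2 * a ^ 3 / (b * ρ) := by
  simp [eigenvectorMatrix, det_succ_row_zero, Fin.sum_univ_succ, Fin.succAbove]
  ring

variable {α ρ u a u_s b}

theorem isUnit_eigenvectorMatrix (hρ : ρ ≠ 0) (ha : a ≠ 0) (hb : b ≠ 0) :
    IsUnit (eigenvectorMatrix α ρ u a u_s b) := by
  rw [isUnit_iff_isUnit_det, det_eigenvectorMatrix, isUnit_iff_ne_zero]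
  positivity

theorem systemMatrix_mulVec_eigenvector (hρ : ρ ≠ 0) (hb : b ≠ 0)
    (hres : (u - u_s) ^ 2 ≠ a ^ 2) (j : Fin 5) :
    systemMatrix α ρ u a u_s b *ᵥ (eigenvectorMatrix α ρ u a u_s b)ᵀ j =
      eigenvalues u a u_s j • (eigenvectorMatrix α ρ u a u_s b)ᵀ j := by
  have hΔ : (u - u_s) ^ 2 - a ^ 2 ≠ 0 := sub_ne_zero.mpr hres
  fin_cases j <;> ext i <;> fin_cases i <;>
    simp [systemMatrix, eigenvectorMatrix, eigenvalues, mulVec, dotProduct, Fin.sum_univ_five] <;>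
    field_simp <;> ring

end ReducedBN

open ReducedBN in
theorem reducedBN_diagonalizable_general (α ρ u a u_s b : ℝ) (hρ : 0 < ρ)
    (ha : a ≠ 0) (hb : b ≠ 0) (hres : (u - u_s) ^ 2 ≠ a ^ 2) :
    let C : Matrix (Fin 5) (Fin 5) ℝ :=
      !![u_s, 0, 0, 0, 0;
         ρ * (u - u_s) / α, u, ρ, 0, 0;
         0, a ^ 2 / ρ, u, b / ρ, 0;
         0, 0, 0, u, 0;
         0, 0, 0, 0, 0]
    -- columns of P are R₀, R₁,₁, R₁,₂, R₁,₃, R₂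
    let P : Matrix (Fin 5) (Fin 5) ℝ :=
      !![1, 0, 0, 0, 0;
         -(ρ * (u - u_s) ^ 2) / (α * ((u - u_s) ^ 2 - a ^ 2)), 1, 1, 1, 0;
         (u - u_s) * a ^ 2 / (α * ((u - u_s) ^ 2 - a ^ 2)), -(a / ρ), 0, a / ρ, 0;
         0, 0, -(a ^ 2 / b), 0, 0;
         0, 0, 0, 0, 1]
    IsUnit P ∧ P⁻¹ * C * P = Matrix.diagonal ![u_s, u - a, u, u + a, 0] := by
  have hP : IsUnit (eigenvectorMatrix α ρ u a u_s b) := isUnit_eigenvectorMatrix hρ.ne' ha hb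
  exact ⟨hP, inv_mul_mul_eq_diagonal hP (systemMatrix_mulVec_eigenvector hρ.ne' hb hres)⟩

/-- The matrix `P` whose columns are the eigenvectors `R₀, R₁,₁, R₁,₂, R₁,₃, R₂`
diagonalizes the primitive-variable system matrix `C` of the reduced
Baer–Nunziato model: `P` is invertible and `P⁻¹ C P = diag(u_s, u-a, u, u+a, 0)`.
In particular `C` has a full set of 5 linearly independent real eigenvectors,
so the reduced Baer–Nunziato system is hyperbolic at such states. -/
theorem reducedBN_diagonalizable (α ρ u a u_s b : ℝ) (hα : α ≠ 0) (hρ : 0 < ρ)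
    (ha : a ≠ 0) (hb : b ≠ 0) (hres : (u - u_s) ^ 2 ≠ a ^ 2) :
    let C : Matrix (Fin 5) (Fin 5) ℝ :=
      !![u_s, 0, 0, 0, 0;
         ρ * (u - u_s) / α, u, ρ, 0, 0;
         0, a ^ 2 / ρ, u, b / ρ, 0;
         0, 0, 0, u, 0;
         0, 0, 0, 0, 0]
    -- columns of P are R₀, R₁,₁, R₁,₂, R₁,₃, R₂
    let P : Matrix (Fin 5) (Fin 5) ℝ :=
      !![1, 0, 0, 0, 0;
         -(ρ * (u - u_s) ^ 2) / (α * ((u - u_s) ^ 2 - a ^ 2)), 1, 1, 1, 0;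
         (u - u_s) * a ^ 2 / (α * ((u - u_s) ^ 2 - a ^ 2)), -(a / ρ), 0, a / ρ, 0;
         0, 0, -(a ^ 2 / b), 0, 0;
         0, 0, 0, 0, 1]
    IsUnit P ∧ P⁻¹ * C * P = Matrix.diagonal ![u_s, u - a, u, u + a, 0] :=
  reducedBN_diagonalizable_general α ρ u a u_s b hρ ha hb hres
end

section
/- Let ρ⁺ > 0 and m⁺, E⁺, u_s⁻, u_s⁺, p, S be real numbers with S ≠ 0, and set ū_s = (u_s⁻ + u_s⁺)/2. Suppose the generalized Rankine–Hugoniot conditions for the material-interface wave hold: ū_s = S, m⁺ = S·ρ⁺, (m⁺)²/ρ⁺ = S·m⁺, m⁺·E⁺/ρ⁺ + (m⁺/ρ⁺ − ū_s)·p = S·E⁺, and 0 = S·(u_s⁺ − u_s⁻). Then u_s⁺ = u_s⁻ = S (the wave is a contact moving with the solid velocity) and m⁺/ρ⁺ = S; that is, the fluid velocity u⁺ := m⁺/ρ⁺ on the gas side equals the solid velocity u_s := u_s⁺ = u_s⁻. -/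
theorem reducedBN_interface_velocity_RH_nonzero_speed_general
    (ρp mp usm usp S : ℝ) (hρp : 0 < ρp) (hS : S ≠ 0)
    (hbar : (usm + usp) / 2 = S)
    (h2 : mp = S * ρp)
    (h5 : (0 : ℝ) = S * (usp - usm)) :
    usp = S ∧ usm = S ∧ mp / ρp = S := by
  have hcontinuous : usp = usm :=
    sub_eq_zero.mp ((mul_eq_zero.mp h5.symm).resolve_left hS)
  refine ⟨by linarith, by linarith, ?_⟩
  rw [h2, mul_div_cancel_right₀ S hρp.ne']

/-- Generalized Rankine–Hugoniot proof (case `S ≠ 0`): if the jump conditions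
for the material-interface wave of the reduced Baer–Nunziato model hold with
speed `S ≠ 0` between the pure-solid state `(0,0,0,0,u_s⁻)` and the pure-gas
state `(1, ρ⁺, m⁺, E⁺, u_s⁺)`, then the wave is a contact moving with the
solid velocity, `u_s⁺ = u_s⁻ = S`, and the gas velocity `u⁺ = m⁺/ρ⁺` equals
the solid velocity. -/
theorem reducedBN_interface_velocity_RH_nonzero_speed
    (ρp mp Ep usm usp p S : ℝ) (hρp : 0 < ρp) (hS : S ≠ 0)
    (hbar : (usm + usp) / 2 = S)
    (h2 : mp = S * ρp)
    (h3 : mp ^ 2 / ρp = S * mp)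
    (h4 : mp * Ep / ρp + (mp / ρp - (usm + usp) / 2) * p = S * Ep)
    (h5 : (0 : ℝ) = S * (usp - usm)) :
    usp = S ∧ usm = S ∧ mp / ρp = S :=
  reducedBN_interface_velocity_RH_nonzero_speed_general ρp mp usm usp S hρp hS hbar h2 h5
end

section
/- Let γ > 1 and define the ideal-gas pressure on D = {q ∈ ℝ⁵ : q₁ > 0, q₂ > 0} by p(q) = (γ − 1)·(q₄ − q₃²/(2q₂))/q₁. Let Q⁻ = (0, 0, 0, 0, u_s⁻) and Q⁺ = (1, ρ⁺, m⁺, E⁺, u_s⁺) with ρ⁺ > 0, and let Ψ(τ) = (1 − τ)·Q⁻ + τ·Q⁺ be the straight-line segment path connecting them. Then for every τ ∈ (0, 1], Ψ(τ) ∈ D and p(Ψ(τ)) = p(Q⁺) = (γ − 1)·(E⁺ − (m⁺)²/(2ρ⁺)); i.e. the pressure is constant along the straight-line path from the pure-solid state to the pure-gas state. -/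
/-! The pressure only sees the gas components `q₁, …, q₄`, and these vanish at the pure-solid
state `Q⁻`; so along the segment they equal `τ • Q⁺`. The pressure is homogeneous of degree
zero in them, hence constant for `τ ≠ 0`. -/

namespace ReducedBN

noncomputable def idealGasPressure (γ : ℝ) (q : Fin 5 → ℝ) : ℝ :=
  (γ - 1) * (q 3 - q 2 ^ 2 / (2 * q 1)) / q 0

variable (γ : ℝ)

theorem idealGasPressure_congr {q q' : Fin 5 → ℝ} (h : ∀ i, i ≠ 4 → q i = q' i) :
    idealGasPressure γ q = idealGasPressure γ q' := by
  simp only [idealGasPressure, h 0 (by decide), h 1 (by decide), h 2 (by decide),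
    h 3 (by decide)]

theorem idealGasPressure_smul {τ : ℝ} (hτ : τ ≠ 0) (q : Fin 5 → ℝ) :
    idealGasPressure γ (τ • q) = idealGasPressure γ q := by
  have hkin : (τ * q 2) ^ 2 / (2 * (τ * q 1)) = τ * (q 2 ^ 2 / (2 * q 1)) := by
    rcases eq_or_ne (q 1) 0 with hq | hq
    · simp [hq]
    · field_simp
  simp only [idealGasPressure, Pi.smul_apply, smul_eq_mul]
  rw [hkin, ← mul_sub, mul_left_comm, mul_div_mul_left _ _ hτ]

end ReducedBN

open ReducedBN in
theorem reducedBN_pressure_constant_along_segment_path_general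
    (γ : ℝ) (ρp mp Ep usm usp : ℝ) (hρp : 0 < ρp) :
    let p : (Fin 5 → ℝ) → ℝ := fun q => (γ - 1) * (q 3 - (q 2) ^ 2 / (2 * q 1)) / q 0
    let Qm : Fin 5 → ℝ := ![0, 0, 0, 0, usm]
    let Qp : Fin 5 → ℝ := ![1, ρp, mp, Ep, usp]
    let Ψ : ℝ → Fin 5 → ℝ := fun τ => (1 - τ) • Qm + τ • Qp
    ∀ τ ∈ Set.Ioc (0 : ℝ) 1,
      (0 < Ψ τ 0 ∧ 0 < Ψ τ 1) ∧
      p (Ψ τ) = p Qp ∧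
      p Qp = (γ - 1) * (Ep - mp ^ 2 / (2 * ρp)) := by
  intro p Qm Qp Ψ τ hτ
  replace hτ := hτ.1
  have hΨ : ∀ i, i ≠ 4 → Ψ τ i = (τ • Qp) i := by
    intro i hi
    fin_cases i <;> simp [Ψ, Qm, Qp] at hi ⊢
  refine ⟨⟨by simpa [Ψ, Qm, Qp] using hτ, by simpa [Ψ, Qm, Qp] using mul_pos hτ hρp⟩, ?_, ?_⟩
  · change idealGasPressure γ (Ψ τ) = idealGasPressure γ Qp
    rw [idealGasPressure_congr γ hΨ, idealGasPressure_smul γ hτ.ne']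
  · simp [p, Qp]

/-- The ideal-gas pressure `p(q) = (γ-1)(q₄ - q₃²/(2q₂))/q₁` (in conserved
variables `q = (α, αρ, αρu, αρE, u_s)`) is constant along the straight-line
segment path `Ψ(τ) = (1-τ)Q⁻ + τQ⁺` from the pure-solid state
`Q⁻ = (0,0,0,0,u_s⁻)` to the pure-gas state `Q⁺ = (1, ρ⁺, m⁺, E⁺, u_s⁺)`:
for every `τ ∈ (0,1]`, `Ψ(τ)` lies in the admissible set
`D = {q : q₁ > 0, q₂ > 0}` and `p(Ψ(τ)) = p(Q⁺) = (γ-1)(E⁺ - m⁺²/(2ρ⁺))`. -/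
theorem reducedBN_pressure_constant_along_segment_path
    (γ : ℝ) (hγ : 1 < γ) (ρp mp Ep usm usp : ℝ) (hρp : 0 < ρp) :
    let p : (Fin 5 → ℝ) → ℝ := fun q => (γ - 1) * (q 3 - (q 2) ^ 2 / (2 * q 1)) / q 0
    let Qm : Fin 5 → ℝ := ![0, 0, 0, 0, usm]
    let Qp : Fin 5 → ℝ := ![1, ρp, mp, Ep, usp]
    let Ψ : ℝ → Fin 5 → ℝ := fun τ => (1 - τ) • Qm + τ • Qp
    ∀ τ ∈ Set.Ioc (0 : ℝ) 1,
      (0 < Ψ τ 0 ∧ 0 < Ψ τ 1) ∧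
      p (Ψ τ) = p Qp ∧
      p Qp = (γ - 1) * (Ep - mp ^ 2 / (2 * ρp)) :=
  reducedBN_pressure_constant_along_segment_path_general γ ρp mp Ep usm usp hρp
end

section
/- Let γ > 1 and define on D = {q ∈ ℝ⁵ : q₁ > 0, q₂ > 0} the pressure p(q) = (γ−1)(q₄ − q₃²/(2q₂))/q₁ and the 5×5 system matrix A(q) with rows: row 1 = (q₅, 0, 0, 0, 0); row 2 = (0, 0, 1, 0, 0); row 3 = (q₁∂p/∂q₁, −(q₃/q₂)² + q₁∂p/∂q₂, 2q₃/q₂ + q₁∂p/∂q₃, q₁∂p/∂q₄, 0); row 4 = ((q₃/q₂ − q₅)p + (q₁q₃/q₂)∂p/∂q₁, −q₃(q₄ + q₁p)/q₂² + (q₁q₃/q₂)∂p/∂q₂, (q₄ + q₁p)/q₂ + (q₁q₃/q₂)∂p/∂q₃, (q₃/q₂)(1 + q₁∂p/∂q₄), 0); row 5 = (0, 0, 0, 0, 0), where ∂p/∂q₁ = −p/q₁, ∂p/∂q₂ = (γ−1)q₃²/(2q₁q₂²), ∂p/∂q₃ = −(γ−1)q₃/(q₁q₂), ∂p/∂q₄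 = (γ−1)/q₁. Let Q⁻ = (0,0,0,0,u_s⁻), Q⁺ = (1, ρ⁺, m⁺, E⁺, u_s⁺) with ρ⁺ > 0, Ψ(τ) = (1−τ)Q⁻ + τQ⁺, and p⁺ = (γ−1)(E⁺ − (m⁺)²/(2ρ⁺)). Then the componentwise integral ∫₀¹ A(Ψ(τ))·(Q⁺ − Q⁻) dτ (the integrand being defined for τ ∈ (0,1] and integrable on [0,1]) equals ( ū_s, m⁺, (m⁺)²/ρ⁺, (m⁺/ρ⁺ − ū_s)·p⁺ + m⁺E⁺/ρ⁺, 0 ), where ū_s = (u_s⁻ + u_s⁺)/2. -/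
/-! Along the segment the first four coordinates of `Ψ τ` are `τ • (1, ρ⁺, m⁺, E⁺)`, and the
pressure is homogeneous of degree 0 in them, so `p (Ψ τ) = p⁺` for `τ > 0`. The same
homogeneity makes the integrand, for `τ ∈ (0, 1]`, an affine function of the solid velocity
`u_s(τ) = (1 - τ) u_s⁻ + τ u_s⁺`; the singularity at `τ = 0` is removable, and the integral
over `[0, 1]` is the value at the mean `ū_s`. -/

open MeasureTheory Set

theorem integral_one_sub_mul_add_mul (a b : ℝ) :
    ∫ τ in (0 : ℝ)..1, ((1 - τ) * a + τ * b) = (a + b) / 2 := by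
  have hint : ∀ c : ℝ, IntervalIntegrable (fun τ : ℝ => τ * c) volume 0 1 := fun c =>
    (continuous_id.mul continuous_const).intervalIntegrable 0 1
  simp only [sub_mul, one_mul]
  rw [intervalIntegral.integral_add (intervalIntegrable_const.sub (hint a)) (hint b),
    intervalIntegral.integral_sub intervalIntegrable_const (hint a)]
  simp [integral_id]
  ring

theorem intervalIntegrable_and_integral_eq_of_eqOn_affine {ι : Type*} {F : ℝ → ι → ℝ}
    {C D : ι → ℝ} {a b : ℝ}
    (hF : EqOn F (fun τ => C + ((1 - τ) * a + τ * b) • D) (uIoc 0 1)) (i : ι) :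
    IntervalIntegrable (fun τ => F τ i) volume 0 1 ∧
      ∫ τ in (0 : ℝ)..1, F τ i = (C + ((a + b) / 2) • D) i := by
  have hFi : EqOn (fun τ => F τ i) (fun τ => C i + ((1 - τ) * a + τ * b) * D i) (uIoc 0 1) :=
    fun τ hτ => by simp [hF hτ]
  have hcont : Continuous fun τ : ℝ => ((1 - τ) * a + τ * b) * D i := by fun_prop
  refine ⟨(intervalIntegrable_congr hFi).2 (intervalIntegrable_const.add
    (hcont.intervalIntegrable _ _)), ?_⟩
  rw [intervalIntegral.integral_congr_ae (ae_of_all _ hFi),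
    intervalIntegral.integral_add intervalIntegrable_const (hcont.intervalIntegrable _ _),
    intervalIntegral.integral_mul_const, integral_one_sub_mul_add_mul]
  simp

theorem reducedBN_RH_path_integral_general
    (γ : ℝ) (ρp mp Ep usm usp : ℝ) (hρp : 0 < ρp) :
    let p : (Fin 5 → ℝ) → ℝ :=
      fun q => (γ - 1) * (q 3 - (q 2) ^ 2 / (2 * q 1)) / q 0
    let dp1 : (Fin 5 → ℝ) → ℝ := fun q => -(p q) / q 0
    let dp2 : (Fin 5 → ℝ) → ℝ :=
      fun q => (γ - 1) * (q 2) ^ 2 / (2 * q 0 * (q 1) ^ 2)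
    let dp3 : (Fin 5 → ℝ) → ℝ := fun q => -((γ - 1) * q 2 / (q 0 * q 1))
    let dp4 : (Fin 5 → ℝ) → ℝ := fun q => (γ - 1) / q 0
    let A : (Fin 5 → ℝ) → Matrix (Fin 5) (Fin 5) ℝ := fun q =>
      !![q 4, 0, 0, 0, 0;
         0, 0, 1, 0, 0;
         q 0 * dp1 q, -(q 2 / q 1) ^ 2 + q 0 * dp2 q,
           2 * (q 2 / q 1) + q 0 * dp3 q, q 0 * dp4 q, 0;
         (q 2 / q 1 - q 4) * p q + (q 0 * q 2 / q 1) * dp1 q,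
           -(q 2 * (q 3 + q 0 * p q)) / (q 1) ^ 2 + (q 0 * q 2 / q 1) * dp2 q,
           (q 3 + q 0 * p q) / q 1 + (q 0 * q 2 / q 1) * dp3 q,
           (q 2 / q 1) * (1 + q 0 * dp4 q), 0;
         0, 0, 0, 0, 0]
    let Qm : Fin 5 → ℝ := ![0, 0, 0, 0, usm]
    let Qp : Fin 5 → ℝ := ![1, ρp, mp, Ep, usp]
    let Ψ : ℝ → Fin 5 → ℝ := fun τ => (1 - τ) • Qm + τ • Qp
    let pp : ℝ := (γ - 1) * (Ep - mp ^ 2 / (2 * ρp))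
    let usbar : ℝ := (usm + usp) / 2
    ∀ i : Fin 5,
      IntervalIntegrable (fun τ => (A (Ψ τ)).mulVec (Qp - Qm) i) volume 0 1 ∧
      (∫ τ in (0 : ℝ)..1, (A (Ψ τ)).mulVec (Qp - Qm) i)
        = ![usbar, mp, mp ^ 2 / ρp,
            (mp / ρp - usbar) * pp + mp * Ep / ρp, 0] i := by
  intro p dp1 dp2 dp3 dp4 A Qm Qp Ψ pp usbar
  have hΨ (τ : ℝ) : Ψ τ = ![τ, τ * ρp, τ * mp, τ * Ep, (1 - τ) * usm + τ * usp] := by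
    ext i; fin_cases i <;> simp [Ψ, Qm, Qp]
  have hp {τ : ℝ} (hτ : τ ≠ 0) : p (Ψ τ) = pp := by
    simp only [p, pp, hΨ, Fin.isValue, Matrix.cons_val, Matrix.cons_val_one, Matrix.cons_val_zero]
    field_simp
  let C : Fin 5 → ℝ := ![0, mp, mp ^ 2 / ρp, mp / ρp * pp + mp * Ep / ρp, 0]
  let D : Fin 5 → ℝ := ![1, 0, 0, -pp, 0]
  have hF : EqOn (fun τ => (A (Ψ τ)).mulVec (Qp - Qm))
      (fun τ => C + ((1 - τ) * usm + τ * usp) • D) (uIoc 0 1) := by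
    intro τ hτ
    have hτ0 : τ ≠ 0 := (uIoc_of_le (zero_le_one' ℝ) ▸ hτ).1.ne'
    simp only [A, dp1, dp2, dp3, dp4, hp hτ0]
    rw [hΨ]
    ext i
    fin_cases i <;>
      simp only [Matrix.mulVec, dotProduct, Fin.sum_univ_five, Fin.isValue, Fin.zero_eta,
        Fin.mk_one, Fin.reduceFinMk, Matrix.of_apply, Matrix.cons_val', Matrix.cons_val,
        Matrix.cons_val_zero, Matrix.cons_val_one, Matrix.cons_val_fin_one, Matrix.smul_cons,
        Matrix.smul_empty, Pi.add_apply, Pi.sub_apply, smul_eq_mul, Qp, Qm, C, D, pp] <;>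
      field_simp <;> ring
  have htarget : ![usbar, mp, mp ^ 2 / ρp, (mp / ρp - usbar) * pp + mp * Ep / ρp, 0]
      = C + usbar • D := by
    ext i
    fin_cases i <;>
      simp only [Fin.isValue, Fin.zero_eta, Fin.mk_one, Fin.reduceFinMk, Matrix.cons_val,
        Matrix.cons_val_zero, Matrix.cons_val_one, Matrix.smul_cons, Matrix.smul_empty,
        Pi.add_apply, smul_eq_mul, C, D] <;> ring
  rw [htarget]
  exact intervalIntegrable_and_integral_eq_of_eqOn_affine hF

/-- The componentwise path integral `∫₀¹ A(Ψ(τ))·(Q⁺ - Q⁻) dτ` of the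
Dal Maso–Le Floch–Murat generalized Rankine–Hugoniot condition for the reduced
Baer–Nunziato model, along the straight-line segment path `Ψ` from the
pure-solid state `Q⁻ = (0,0,0,0,u_s⁻)` to the pure-gas state
`Q⁺ = (1, ρ⁺, m⁺, E⁺, u_s⁺)`, is well defined (integrable) and equals
`(ū_s, m⁺, m⁺²/ρ⁺, (m⁺/ρ⁺ - ū_s)p⁺ + m⁺E⁺/ρ⁺, 0)`, where
`ū_s = (u_s⁻ + u_s⁺)/2`. -/
theorem reducedBN_RH_path_integral
    (γ : ℝ) (hγ : 1 < γ) (ρp mp Ep usm usp : ℝ) (hρp : 0 < ρp) :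
    let p : (Fin 5 → ℝ) → ℝ :=
      fun q => (γ - 1) * (q 3 - (q 2) ^ 2 / (2 * q 1)) / q 0
    let dp1 : (Fin 5 → ℝ) → ℝ := fun q => -(p q) / q 0
    let dp2 : (Fin 5 → ℝ) → ℝ :=
      fun q => (γ - 1) * (q 2) ^ 2 / (2 * q 0 * (q 1) ^ 2)
    let dp3 : (Fin 5 → ℝ) → ℝ := fun q => -((γ - 1) * q 2 / (q 0 * q 1))
    let dp4 : (Fin 5 → ℝ) → ℝ := fun q => (γ - 1) / q 0
    let A : (Fin 5 → ℝ) → Matrix (Fin 5) (Fin 5) ℝ := fun q =>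
      !![q 4, 0, 0, 0, 0;
         0, 0, 1, 0, 0;
         q 0 * dp1 q, -(q 2 / q 1) ^ 2 + q 0 * dp2 q,
           2 * (q 2 / q 1) + q 0 * dp3 q, q 0 * dp4 q, 0;
         (q 2 / q 1 - q 4) * p q + (q 0 * q 2 / q 1) * dp1 q,
           -(q 2 * (q 3 + q 0 * p q)) / (q 1) ^ 2 + (q 0 * q 2 / q 1) * dp2 q,
           (q 3 + q 0 * p q) / q 1 + (q 0 * q 2 / q 1) * dp3 q,
           (q 2 / q 1) * (1 + q 0 * dp4 q), 0;
         0, 0, 0, 0, 0]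
    let Qm : Fin 5 → ℝ := ![0, 0, 0, 0, usm]
    let Qp : Fin 5 → ℝ := ![1, ρp, mp, Ep, usp]
    let Ψ : ℝ → Fin 5 → ℝ := fun τ => (1 - τ) • Qm + τ • Qp
    let pp : ℝ := (γ - 1) * (Ep - mp ^ 2 / (2 * ρp))
    let usbar : ℝ := (usm + usp) / 2
    ∀ i : Fin 5,
      IntervalIntegrable (fun τ => (A (Ψ τ)).mulVec (Qp - Qm) i) volume 0 1 ∧
      (∫ τ in (0 : ℝ)..1, (A (Ψ τ)).mulVec (Qp - Qm) i)
        = ![usbar, mp, mp ^ 2 / ρp,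
            (mp / ρp - usbar) * pp + mp * Ep / ρp, 0] i :=
  reducedBN_RH_path_integral_general γ ρp mp Ep usm usp hρp
end

section
/- Consider the two-dimensional reduced Baer–Nunziato model in conserved variables q = (q₁,…,q₇) = (α, αρ, αρu, αρv, αρE, u_s, v_s) with q₁ > 0, q₂ > 0, pressure p(q) = (γ−1)(q₅ − (q₃² + q₄²)/(2q₂))/q₁ for some γ > 1, and non-conservative matrices B_x(q), B_y(q) ∈ ℝ^{7×7} whose only nonzero entries are in the first column: column 1 of B_x(q) = (q₆, 0, −p, 0, −p·q₆, 0, 0) and column 1 of B_y(q) = (q₇, 0, 0, −p, −p·q₇, 0, 0). For θ ∈ ℝ let T(θ) be the 7×7 matrix acting as the identity on components 1, 2, 5 and as the planar rotation (x, y) ↦ (x cos θ + y sin θ, −x sin θ + y cos θ) on the pairs (q₃, q₄) and (q₆, q₇). Then for every admissible q and every θ, T(θ)⁻¹ · B_x(T(θ)·q) · T(θ) = cos θ · B_x(q) + sin θ · B_y(q); i.e. the non-conservative part of the model is rotationally invariant. -/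
/-!
`B_x(q)` and `B_y(q)` are rank one, `b(q) e₁ᵀ` with `b` their first column, and the first row
of `T(θ)` is `e₁ᵀ`; hence conjugation by `T(θ)` only acts on the column and, as
`T(θ)⁻¹ = T(-θ)`, the claim becomes the vector identity
`T(-θ) b_x(T(θ) q) = cos θ b_x(q) + sin θ b_y(q)`. It holds because the pressure sees the
momentum only through `(αρu)² + (αρv)²`, which the rotation preserves, and the sixth component
of `T(θ) q` is the normal solid velocity `cos θ u_s + sin θ v_s`.
-/

open Matrix

theorem Matrix.mul_vecMulVec_mul_of_vecMul_eq {l m n α : Type*} [Fintype m] [Fintype n]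
    [Semiring α] (A : Matrix l m α) (b : m → α) {u : n → α} {T : Matrix n n α}
    (hu : u ᵥ* T = u) : A * vecMulVec b u * T = vecMulVec (A *ᵥ b) u := by
  rw [Matrix.mul_assoc, vecMulVec_mul, hu, mul_vecMulVec]

noncomputable section

namespace ReducedBN2D

def pressure (γ : ℝ) (q : Fin 7 → ℝ) : ℝ :=
  (γ - 1) * (q 4 - ((q 2) ^ 2 + (q 3) ^ 2) / (2 * q 1)) / q 0

def nonconsColX (γ : ℝ) (q : Fin 7 → ℝ) : Fin 7 → ℝ :=
  ![q 5, 0, -pressure γ q, 0, -pressure γ q * q 5, 0, 0]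

def nonconsColY (γ : ℝ) (q : Fin 7 → ℝ) : Fin 7 → ℝ :=
  ![q 6, 0, 0, -pressure γ q, -pressure γ q * q 6, 0, 0]

def nonconsX (γ : ℝ) (q : Fin 7 → ℝ) : Matrix (Fin 7) (Fin 7) ℝ :=
  !![q 5, 0, 0, 0, 0, 0, 0;
     0, 0, 0, 0, 0, 0, 0;
     -(pressure γ q), 0, 0, 0, 0, 0, 0;
     0, 0, 0, 0, 0, 0, 0;
     -(pressure γ q) * q 5, 0, 0, 0, 0, 0, 0;
     0, 0, 0, 0, 0, 0, 0;
     0, 0, 0, 0, 0, 0, 0]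

def nonconsY (γ : ℝ) (q : Fin 7 → ℝ) : Matrix (Fin 7) (Fin 7) ℝ :=
  !![q 6, 0, 0, 0, 0, 0, 0;
     0, 0, 0, 0, 0, 0, 0;
     0, 0, 0, 0, 0, 0, 0;
     -(pressure γ q), 0, 0, 0, 0, 0, 0;
     -(pressure γ q) * q 6, 0, 0, 0, 0, 0, 0;
     0, 0, 0, 0, 0, 0, 0;
     0, 0, 0, 0, 0, 0, 0]

def rotation (θ : ℝ) : Matrix (Fin 7) (Fin 7) ℝ :=
  !![1, 0, 0, 0, 0, 0, 0;
     0, 1, 0, 0, 0, 0, 0;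
     0, 0, Real.cos θ, Real.sin θ, 0, 0, 0;
     0, 0, -Real.sin θ, Real.cos θ, 0, 0, 0;
     0, 0, 0, 0, 1, 0, 0;
     0, 0, 0, 0, 0, Real.cos θ, Real.sin θ;
     0, 0, 0, 0, 0, -Real.sin θ, Real.cos θ]

lemma nonconsX_eq_vecMulVec (γ : ℝ) (q : Fin 7 → ℝ) :
    nonconsX γ q = vecMulVec (nonconsColX γ q) (Pi.single 0 1) := by
  ext i j
  fin_cases i <;> fin_cases j <;> simp [nonconsX, nonconsColX, vecMulVec_apply]

lemma nonconsY_eq_vecMulVec (γ : ℝ) (q : Fin 7 → ℝ) :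
    nonconsY γ q = vecMulVec (nonconsColY γ q) (Pi.single 0 1) := by
  ext i j
  fin_cases i <;> fin_cases j <;> simp [nonconsY, nonconsColY, vecMulVec_apply]

lemma rotation_neg_mul_rotation (θ : ℝ) : rotation (-θ) * rotation θ = 1 := by
  have := Real.sin_sq_add_cos_sq θ
  ext i j
  fin_cases i <;> fin_cases j <;> simp [rotation, mul_apply, Fin.sum_univ_succ] <;> grind

lemma inv_rotation (θ : ℝ) : (rotation θ)⁻¹ = rotation (-θ) :=
  inv_eq_left_inv (rotation_neg_mul_rotation θ)

lemma single_zero_vecMul_rotation (θ : ℝ) : Pi.single 0 1 ᵥ* rotation θ = Pi.single 0 1 := by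
  ext j
  fin_cases j <;> simp [rotation, vecMul, dotProduct, Fin.sum_univ_succ]

lemma rotation_mulVec (θ : ℝ) (q : Fin 7 → ℝ) :
    rotation θ *ᵥ q = ![q 0, q 1, Real.cos θ * q 2 + Real.sin θ * q 3,
      -(Real.sin θ * q 2) + Real.cos θ * q 3, q 4,
      Real.cos θ * q 5 + Real.sin θ * q 6, -(Real.sin θ * q 5) + Real.cos θ * q 6] := by
  ext i
  fin_cases i <;> simp [rotation, mulVec, dotProduct, Fin.sum_univ_succ]

lemma pressure_rotation_mulVec (γ θ : ℝ) (q : Fin 7 → ℝ) :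
    pressure γ (rotation θ *ᵥ q) = pressure γ q := by
  have hkinetic : (Real.cos θ * q 2 + Real.sin θ * q 3) ^ 2
      + (-(Real.sin θ * q 2) + Real.cos θ * q 3) ^ 2 = q 2 ^ 2 + q 3 ^ 2 := by
    linear_combination (q 2 ^ 2 + q 3 ^ 2) * Real.sin_sq_add_cos_sq θ
  simp [pressure, rotation_mulVec, hkinetic]

lemma rotation_neg_mulVec_nonconsColX_rotation_mulVec (γ θ : ℝ) (q : Fin 7 → ℝ) :
    rotation (-θ) *ᵥ nonconsColX γ (rotation θ *ᵥ q)
      = Real.cos θ • nonconsColX γ q + Real.sin θ • nonconsColY γ q := by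
  rw [nonconsColX, pressure_rotation_mulVec]
  ext i
  fin_cases i <;> simp [rotation, nonconsColX, nonconsColY, mulVec, dotProduct,
    Fin.sum_univ_succ, mul_add, mul_left_comm]

theorem rotation_inv_mul_nonconsX_mul_rotation (γ θ : ℝ) (q : Fin 7 → ℝ) :
    (rotation θ)⁻¹ * nonconsX γ (rotation θ *ᵥ q) * rotation θ
      = Real.cos θ • nonconsX γ q + Real.sin θ • nonconsY γ q := by
  rw [nonconsX_eq_vecMulVec, nonconsX_eq_vecMulVec, nonconsY_eq_vecMulVec,
    mul_vecMulVec_mul_of_vecMul_eq _ _ (single_zero_vecMul_rotation θ), inv_rotation,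
    rotation_neg_mulVec_nonconsColX_rotation_mulVec, add_vecMulVec, smul_vecMulVec,
    smul_vecMulVec]

end ReducedBN2D

end

theorem reducedBN2D_nonconservative_rotational_invariance_general (γ : ℝ) :
    let p : (Fin 7 → ℝ) → ℝ :=
      fun q => (γ - 1) * (q 4 - ((q 2) ^ 2 + (q 3) ^ 2) / (2 * q 1)) / q 0
    let Bx : (Fin 7 → ℝ) → Matrix (Fin 7) (Fin 7) ℝ := fun q =>
      !![q 5, 0, 0, 0, 0, 0, 0;
         0, 0, 0, 0, 0, 0, 0;
         -(p q), 0, 0, 0, 0, 0, 0;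
         0, 0, 0, 0, 0, 0, 0;
         -(p q) * q 5, 0, 0, 0, 0, 0, 0;
         0, 0, 0, 0, 0, 0, 0;
         0, 0, 0, 0, 0, 0, 0]
    let By : (Fin 7 → ℝ) → Matrix (Fin 7) (Fin 7) ℝ := fun q =>
      !![q 6, 0, 0, 0, 0, 0, 0;
         0, 0, 0, 0, 0, 0, 0;
         0, 0, 0, 0, 0, 0, 0;
         -(p q), 0, 0, 0, 0, 0, 0;
         -(p q) * q 6, 0, 0, 0, 0, 0, 0;
         0, 0, 0, 0, 0, 0, 0;
         0, 0, 0, 0, 0, 0, 0]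
    let T : ℝ → Matrix (Fin 7) (Fin 7) ℝ := fun θ =>
      !![1, 0, 0, 0, 0, 0, 0;
         0, 1, 0, 0, 0, 0, 0;
         0, 0, Real.cos θ, Real.sin θ, 0, 0, 0;
         0, 0, -Real.sin θ, Real.cos θ, 0, 0, 0;
         0, 0, 0, 0, 1, 0, 0;
         0, 0, 0, 0, 0, Real.cos θ, Real.sin θ;
         0, 0, 0, 0, 0, -Real.sin θ, Real.cos θ]
    ∀ q : Fin 7 → ℝ, 0 < q 0 → 0 < q 1 → ∀ θ : ℝ,
      (T θ)⁻¹ * Bx ((T θ).mulVec q) * T θ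
        = Real.cos θ • Bx q + Real.sin θ • By q := by
  intro p Bx By T q _ _ θ
  exact ReducedBN2D.rotation_inv_mul_nonconsX_mul_rotation γ θ q

/-- Rotational invariance of the non-conservative part of the two-dimensional
reduced Baer–Nunziato model in conserved variables
`q = (α, αρ, αρu, αρv, αρE, u_s, v_s)`: for every admissible state `q` and
every angle `θ`, `T(θ)⁻¹ · B_x(T(θ)·q) · T(θ) = cos θ · B_x(q) + sin θ · B_y(q)`,
where `B_x, B_y` are the non-conservative matrices (nonzero only in their first
column: `(u_s, 0, -p, 0, -p·u_s, 0, 0)` resp. `(v_s, 0, 0, -p, -p·v_s, 0, 0)`)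
and `T(θ)` is the identity on the components `α, αρ, αρE` and the planar
rotation on the pairs `(αρu, αρv)` and `(u_s, v_s)`. -/
theorem reducedBN2D_nonconservative_rotational_invariance (γ : ℝ) (hγ : 1 < γ) :
    let p : (Fin 7 → ℝ) → ℝ :=
      fun q => (γ - 1) * (q 4 - ((q 2) ^ 2 + (q 3) ^ 2) / (2 * q 1)) / q 0
    let Bx : (Fin 7 → ℝ) → Matrix (Fin 7) (Fin 7) ℝ := fun q =>
      !![q 5, 0, 0, 0, 0, 0, 0;
         0, 0, 0, 0, 0, 0, 0;
         -(p q), 0, 0, 0, 0, 0, 0;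
         0, 0, 0, 0, 0, 0, 0;
         -(p q) * q 5, 0, 0, 0, 0, 0, 0;
         0, 0, 0, 0, 0, 0, 0;
         0, 0, 0, 0, 0, 0, 0]
    let By : (Fin 7 → ℝ) → Matrix (Fin 7) (Fin 7) ℝ := fun q =>
      !![q 6, 0, 0, 0, 0, 0, 0;
         0, 0, 0, 0, 0, 0, 0;
         0, 0, 0, 0, 0, 0, 0;
         -(p q), 0, 0, 0, 0, 0, 0;
         -(p q) * q 6, 0, 0, 0, 0, 0, 0;
         0, 0, 0, 0, 0, 0, 0;
         0, 0, 0, 0, 0, 0, 0]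
    let T : ℝ → Matrix (Fin 7) (Fin 7) ℝ := fun θ =>
      !![1, 0, 0, 0, 0, 0, 0;
         0, 1, 0, 0, 0, 0, 0;
         0, 0, Real.cos θ, Real.sin θ, 0, 0, 0;
         0, 0, -Real.sin θ, Real.cos θ, 0, 0, 0;
         0, 0, 0, 0, 1, 0, 0;
         0, 0, 0, 0, 0, Real.cos θ, Real.sin θ;
         0, 0, 0, 0, 0, -Real.sin θ, Real.cos θ]
    ∀ q : Fin 7 → ℝ, 0 < q 0 → 0 < q 1 → ∀ θ : ℝ,
      (T θ)⁻¹ * Bx ((T θ).mulVec q) * T θ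
        = Real.cos θ • Bx q + Real.sin θ • By q :=
  reducedBN2D_nonconservative_rotational_invariance_general γ
end
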